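/- arXiv:hep-th/0508035 — 2 statements merged into one kernel-verified Lean document; each statement's English description precedes it below -/
import Mathlib

section
/- Derived product identities: if smooth functions M̄, W₁,…,W₆ : ℝ → ℝ satisfy the consistency system (∗) identically, then the following additional identities hold everywhere on ℝ: W₁W₂′ = 0, W₁W₆′ = 0, W₂W₃ = 0, W₅W₆ = 0, W₃W₆ = 0, and W₂W₄ = 0. (For instance, W₁W₂ ≡ 0 forces W₂′ to vanish on the open set where W₁ ≠ 0, whence W₁W₂′ ≡ 0, and then W₁W₂′ − 9W₂W₃ = 0 gives W₂W₃ ≡ 0, etc.) -/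
lemma aux_mul_deriv (f g : ℝ → ℝ) (hf : Continuous f)
    (h : ∀ t, f t * g t = 0) : ∀ t, f t * deriv g t = 0 := by
  intro t
  by_cases ht : f t = 0
  · simp [ht]
  · have hev : g =ᶠ[nhds t] fun _ => (0 : ℝ) := by
      have : {x | f x ≠ 0} ∈ nhds t :=
        (isOpen_ne.preimage hf).mem_nhds ht
      filter_upwards [this] with x hx
      have := h x
      exact (mul_eq_zero.mp this).resolve_left hx
    rw [hev.deriv_eq]
    simp

/-- derived product identities following from the consistency system (∗). -/
theorem consistency_system_derived_identities
    (M W1 W2 W3 W4 W5 W6 : ℝ → ℝ)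
    (hM : ContDiff ℝ (⊤ : ℕ∞) M) (hW1 : ContDiff ℝ (⊤ : ℕ∞) W1) (hW2 : ContDiff ℝ (⊤ : ℕ∞) W2)
    (hW3 : ContDiff ℝ (⊤ : ℕ∞) W3) (hW4 : ContDiff ℝ (⊤ : ℕ∞) W4) (hW5 : ContDiff ℝ (⊤ : ℕ∞) W5)
    (hW6 : ContDiff ℝ (⊤ : ℕ∞) W6)
    (star1 : ∀ t, deriv M t * W1 t = 0)
    (star2 : ∀ t, W1 t * W2 t = 0)
    (star3 : ∀ t, W1 t * deriv W2 t - 9 * W2 t * W3 t = 0)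
    (star4 : ∀ t, W2 t * W3 t + W5 t * W6 t = 0)
    (star5 : ∀ t, W1 t * deriv W6 t + 9 * W3 t * W6 t = 0)
    (star6 : ∀ t, W1 t * W6 t = 0)
    (star7 : ∀ t, W2 t * W4 t + W3 t * W6 t = 0)
    (star8 : ∀ t, W2 t * W5 t = 0)
    (star9 : ∀ t, W4 t * W6 t = 0) :
    (∀ t, W1 t * deriv W2 t = 0) ∧
    (∀ t, W1 t * deriv W6 t = 0) ∧
    (∀ t, W2 t * W3 t = 0) ∧
    (∀ t, W5 t * W6 t = 0) ∧
    (∀ t, W3 t * W6 t = 0) ∧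
    (∀ t, W2 t * W4 t = 0) := by
  have h12 : ∀ t, W1 t * deriv W2 t = 0 := aux_mul_deriv W1 W2 hW1.continuous star2
  have h16 : ∀ t, W1 t * deriv W6 t = 0 := aux_mul_deriv W1 W6 hW1.continuous star6
  have h23 : ∀ t, W2 t * W3 t = 0 := fun t => by have := star3 t; have := h12 t; nlinarith [this]
  have h56 : ∀ t, W5 t * W6 t = 0 := fun t => by have := star4 t; have := h23 t; linarith
  have h36 : ∀ t, W3 t * W6 t = 0 := fun t => by have := star5 t; have := h16 t; nlinarith [this]
  have h24 : ∀ t, W2 t * W4 t = 0 := fun t => by have := star7 t; have := h36 t; linarith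
  exact ⟨h12, h16, h23, h56, h36, h24⟩
end

section
/- On-shell first-order reducibility of the deformed gauge transformation of A: assume the smooth functions M̄, W₁,…,W₆ satisfy the consistency system (∗) identically. Let g ∈ ℝ, let φ and A_μ be smooth fields on ℝ⁵, and let χ : ℝ⁵ → ℝ be smooth. Define the composite gauge parameters ε := 2gW₂(φ)χ, ξ^μ := (∂^μ − 3gW₃(φ)A^μ)χ, and ξ^{μνρλ} := −(g/4)W₅(φ)ε^{μνρλσ}A_σχ (with ξ_{νρλσ} obtained by lowering indices with σ). Then the deformed gauge variation of A evaluated on these parameters satisfies, identically on ℝ⁵: ∂^με − 2gW₂(φ)ξ^μ − 2gW₆(φ)ε^{μνρλσ}ξ_{νρλσ} = 2gW₂′(φ)χ·σ^{μν}(∂_νφ + gW₁(φ)A_ν). In particular this composite variation vanishes at every point where the H-field equation ∂_νφ + gW₁(φ)A_ν = 0 holds. -/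
noncomputable section

/-- Spacetime is `ℝ⁵`. -/
abbrev Spacetime : Type := Fin 5 → ℝ

/-- Partial derivative `∂_μ f` of a scalar function on `ℝ⁵`. -/
noncomputable def pd (μ : Fin 5) (f : Spacetime → ℝ) (x : Spacetime) : ℝ :=
  fderiv ℝ f x (Pi.single μ 1)

/-- The Minkowski metric `σ_{μν} = diag(−1,+1,+1,+1,+1)` (equal to its inverse `σ^{μν}`). -/
def eta (μ ν : Fin 5) : ℝ := if μ = ν then (if μ = 0 then -1 else 1) else 0

/-- The Levi-Civita symbol `ε^{μνρλσ}` with `ε^{01234} = 1`. -/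
noncomputable def lev (μ ν ρ l s : Fin 5) : ℝ :=
  ∑ p : Equiv.Perm (Fin 5),
    if p 0 = μ ∧ p 1 = ν ∧ p 2 = ρ ∧ p 3 = l ∧ p 4 = s
    then ((Equiv.Perm.sign p : ℤ) : ℝ) else 0

/-- The fully lowered Levi-Civita symbol `ε_{μνρλσ}`, obtained by lowering all
indices with the Minkowski metric. -/
noncomputable def levLow (a b c d e : Fin 5) : ℝ :=
  ∑ a', ∑ b', ∑ c', ∑ d', ∑ e',
    eta a a' * eta b b' * eta c c' * eta d d' * eta e e' * lev a' b' c' d' e'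

/-! ### Auxiliary lemmas -/

/-- All five entries pairwise distinct. -/
def dst (a b c d e : Fin 5) : Prop :=
  a≠b ∧ a≠c ∧ a≠d ∧ a≠e ∧ b≠c ∧ b≠d ∧ b≠e ∧ c≠d ∧ c≠e ∧ d≠e

instance : ∀ a b c d e : Fin 5, Decidable (dst a b c d e) := fun _ _ _ _ _ => instDecidableAnd

/-- Diagonal of the metric. -/
def Dc : Fin 5 → ℝ := fun i => if i = 0 then -1 else 1

lemma eta_apply (μ ν : Fin 5) : eta μ ν = if μ = ν then Dc μ else 0 := rfl

lemma lev_zero {a b c d e : Fin 5} (h : ¬ dst a b c d e) : lev a b c d e = 0 := by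
  unfold lev
  apply Finset.sum_eq_zero
  intro p _
  rw [if_neg]
  rintro ⟨h0, h1, h2, h3, h4⟩
  subst h0 h1 h2 h3 h4
  apply h
  refine ⟨?_, ?_, ?_, ?_, ?_, ?_, ?_, ?_, ?_, ?_⟩ <;>
    · simp only [ne_eq, EmbeddingLike.apply_eq_iff_eq]; decide

lemma lev_sign {a b c d e : Fin 5} (h : dst a b c d e) :
    ∃ p : Equiv.Perm (Fin 5), p 0 = a ∧ p 1 = b ∧ p 2 = c ∧ p 3 = d ∧ p 4 = e ∧
      lev a b c d e = ((Equiv.Perm.sign p : ℤ) : ℝ) := by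
  have hinj : Function.Injective ![a, b, c, d, e] := by
    obtain ⟨h1,h2,h3,h4,h5,h6,h7,h8,h9,h10⟩ := h
    intro i j hij
    fin_cases i <;> fin_cases j <;> simp_all <;> simp_all [eq_comm]
  have hbij : Function.Bijective ![a, b, c, d, e] :=
    (Finite.injective_iff_bijective).mp hinj
  refine ⟨Equiv.ofBijective _ hbij, rfl, rfl, rfl, rfl, rfl, ?_⟩
  unfold lev
  rw [Finset.sum_eq_single (Equiv.ofBijective _ hbij)]
  · rw [if_pos ⟨rfl, rfl, rfl, rfl, rfl⟩]
  · intro q _ hq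
    rw [if_neg]
    rintro ⟨h0, h1, h2, h3, h4⟩
    apply hq
    ext i
    fin_cases i <;> simp_all [Equiv.ofBijective]
  · intro hmem; exact absurd (Finset.mem_univ _) hmem

lemma lev_cyc (a b c d e : Fin 5) : lev b c d e a = lev a b c d e := by
  unfold lev
  rw [← Equiv.sum_comp (Equiv.mulRight (finRotate 5))]
  apply Finset.sum_congr rfl
  intro p _
  simp only [Equiv.coe_mulRight]
  have hs : Equiv.Perm.sign (p * finRotate 5) = Equiv.Perm.sign p := by
    rw [map_mul, sign_finRotate]; simp; decide
  have e0 : (p * finRotate 5) 0 = p 1 := by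
    rw [Equiv.Perm.mul_apply]; congr 1
  have e1 : (p * finRotate 5) 1 = p 2 := by
    rw [Equiv.Perm.mul_apply]; congr 1
  have e2 : (p * finRotate 5) 2 = p 3 := by
    rw [Equiv.Perm.mul_apply]; congr 1
  have e3 : (p * finRotate 5) 3 = p 4 := by
    rw [Equiv.Perm.mul_apply]; congr 1
  have e4 : (p * finRotate 5) 4 = p 0 := by
    rw [Equiv.Perm.mul_apply]; congr 1
  simp only [hs, e0, e1, e2, e3, e4]
  have : (p 1 = b ∧ p 2 = c ∧ p 3 = d ∧ p 4 = e ∧ p 0 = a) ↔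
      (p 0 = a ∧ p 1 = b ∧ p 2 = c ∧ p 3 = d ∧ p 4 = e) := by tauto
  simp only [this]

def Dz : Fin 5 → ℤ := fun i => if i = 0 then -1 else 1

lemma DcZ (i : Fin 5) : ((Dz i : ℤ) : ℝ) = Dc i := by
  unfold Dz Dc; split <;> norm_num

lemma fin5_cover : ∀ μ ν ρ l s τ : Fin 5, dst μ ν ρ l s → τ ≠ μ → ¬ dst ν ρ l s τ := by decide

lemma lev_sq {a b c d e : Fin 5} (h : dst a b c d e) :
    lev a b c d e * lev a b c d e = 1 := by
  obtain ⟨p, -, -, -, -, -, hp⟩ := lev_sign h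
  rw [hp]
  have : ((Equiv.Perm.sign p : ℤ) : ℝ) * ((Equiv.Perm.sign p : ℤ) : ℝ)
      = (((Equiv.Perm.sign p * Equiv.Perm.sign p : ℤˣ) : ℤ) : ℝ) := by push_cast; ring
  rw [this, Int.units_mul_self]; norm_num

lemma ind (μ : Fin 5) :
    (∑ ν, ∑ ρ, ∑ l, ∑ s, if dst μ ν ρ l s then Dc ν * Dc ρ * Dc l * Dc s else 0)
      = -24 * Dc μ := by
  have hz : ∀ μ : Fin 5,
      (∑ ν, ∑ ρ, ∑ l, ∑ s, if dst μ ν ρ l s then Dz ν * Dz ρ * Dz l * Dz s else 0)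
        = -24 * Dz μ := by decide
  have h := congrArg (fun z : ℤ => (z : ℝ)) (hz μ)
  push_cast [apply_ite (fun z : ℤ => (z : ℝ)), DcZ] at h
  convert h using 1

lemma key' (μ : Fin 5) (B : Fin 5 → ℝ) :
    (∑ ν, ∑ ρ, ∑ l, ∑ s,
        lev μ ν ρ l s * ((Dc ν * Dc ρ * Dc l * Dc s) * (∑ τ, lev ν ρ l s τ * B τ)))
      = -24 * Dc μ * B μ := by
  have step : ∀ ν ρ l s : Fin 5,
      lev μ ν ρ l s * ((Dc ν * Dc ρ * Dc l * Dc s) * (∑ τ, lev ν ρ l s τ * B τ))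
        = (if dst μ ν ρ l s then Dc ν * Dc ρ * Dc l * Dc s else 0) * B μ := by
    intro ν ρ l s
    by_cases hd : dst μ ν ρ l s
    · have hτ : (∑ τ, lev ν ρ l s τ * B τ) = lev ν ρ l s μ * B μ := by
        apply Finset.sum_eq_single
        · intro τ _ hτμ
          rw [lev_zero (fin5_cover μ ν ρ l s τ hd hτμ), zero_mul]
        · intro hmem; exact absurd (Finset.mem_univ _) hmem
      rw [hτ, if_pos hd, lev_cyc μ ν ρ l s]
      have hsq := lev_sq hd
      linear_combination (Dc ν * Dc ρ * Dc l * Dc s * B μ) * hsq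
    · rw [lev_zero hd, zero_mul, if_neg hd, zero_mul]
  calc (∑ ν, ∑ ρ, ∑ l, ∑ s,
        lev μ ν ρ l s * ((Dc ν * Dc ρ * Dc l * Dc s) * (∑ τ, lev ν ρ l s τ * B τ)))
      = ∑ ν, ∑ ρ, ∑ l, ∑ s,
          (if dst μ ν ρ l s then Dc ν * Dc ρ * Dc l * Dc s else 0) * B μ := by
        refine Finset.sum_congr rfl fun ν _ => Finset.sum_congr rfl fun ρ _ =>
          Finset.sum_congr rfl fun l _ => Finset.sum_congr rfl fun s _ => step ν ρ l s
    _ = (∑ ν, ∑ ρ, ∑ l, ∑ s,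
          if dst μ ν ρ l s then Dc ν * Dc ρ * Dc l * Dc s else 0) * B μ := by
        simp only [← Finset.sum_mul]
    _ = -24 * Dc μ * B μ := by rw [ind μ]

lemma eta_contract (μ : Fin 5) (f : Fin 5 → ℝ) :
    (∑ ν, eta μ ν * f ν) = Dc μ * f μ := by
  simp [eta_apply, ite_mul, zero_mul, Finset.sum_ite_eq]

lemma pd_comp_mul (W : ℝ → ℝ) (hW : ContDiff ℝ (⊤ : ℕ∞) W) (φ χ : Spacetime → ℝ)
    (hφ : ContDiff ℝ (⊤ : ℕ∞) φ) (hχ : ContDiff ℝ (⊤ : ℕ∞) χ) (c : ℝ) (ν : Fin 5) (x : Spacetime) :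
    pd ν (fun y => c * W (φ y) * χ y) x
      = c * (deriv W (φ x) * pd ν φ x * χ x) + c * W (φ x) * pd ν χ x := by
  have hφd : HasFDerivAt φ (fderiv ℝ φ x) x := (hφ.differentiable (by simp) x).hasFDerivAt
  have hχd : HasFDerivAt χ (fderiv ℝ χ x) x := (hχ.differentiable (by simp) x).hasFDerivAt
  have hWd : HasDerivAt W (deriv W (φ x)) (φ x) :=
    (hW.differentiable (by simp) (φ x)).hasDerivAt
  have h1 : HasFDerivAt (fun y => W (φ y)) (deriv W (φ x) • fderiv ℝ φ x) x :=
    hWd.comp_hasFDerivAt x hφd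
  have h2 : HasFDerivAt (fun y => c * W (φ y)) (c • (deriv W (φ x) • fderiv ℝ φ x)) x :=
    h1.const_mul c
  have h3 : HasFDerivAt (fun y => c * W (φ y) * χ y) _ x := h2.mul hχd
  unfold pd
  rw [h3.fderiv]
  simp only [ContinuousLinearMap.add_apply, ContinuousLinearMap.smul_apply, smul_eq_mul]
  show (c * W (φ x)) * fderiv ℝ χ x (Pi.single ν 1)
      + χ x * (c * (deriv W (φ x) * fderiv ℝ φ x (Pi.single ν 1))) = _
  ring

/-- on-shell first-order reducibility of the deformed gauge
transformation of the one-form `A`. -/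
theorem deformed_A_gauge_reducibility_on_shell
    (M W1 W2 W3 W4 W5 W6 : ℝ → ℝ)
    (hM : ContDiff ℝ (⊤ : ℕ∞) M) (hW1 : ContDiff ℝ (⊤ : ℕ∞) W1) (hW2 : ContDiff ℝ (⊤ : ℕ∞) W2)
    (hW3 : ContDiff ℝ (⊤ : ℕ∞) W3) (hW4 : ContDiff ℝ (⊤ : ℕ∞) W4) (hW5 : ContDiff ℝ (⊤ : ℕ∞) W5)
    (hW6 : ContDiff ℝ (⊤ : ℕ∞) W6)
    -- the consistency system (∗)
    (star1 : ∀ t, deriv M t * W1 t = 0)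
    (star2 : ∀ t, W1 t * W2 t = 0)
    (star3 : ∀ t, W1 t * deriv W2 t - 9 * W2 t * W3 t = 0)
    (star4 : ∀ t, W2 t * W3 t + W5 t * W6 t = 0)
    (star5 : ∀ t, W1 t * deriv W6 t + 9 * W3 t * W6 t = 0)
    (star6 : ∀ t, W1 t * W6 t = 0)
    (star7 : ∀ t, W2 t * W4 t + W3 t * W6 t = 0)
    (star8 : ∀ t, W2 t * W5 t = 0)
    (star9 : ∀ t, W4 t * W6 t = 0)
    (g : ℝ)
    -- fields and the reducibility parameter
    (φ : Spacetime → ℝ) (A : Fin 5 → Spacetime → ℝ) (χ : Spacetime → ℝ)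
    (hφ : ContDiff ℝ (⊤ : ℕ∞) φ) (hA : ∀ μ, ContDiff ℝ (⊤ : ℕ∞) (A μ)) (hχ : ContDiff ℝ (⊤ : ℕ∞) χ)
    -- composite gauge parameters
    (ε : Spacetime → ℝ) (hε : ∀ x, ε x = 2 * g * W2 (φ x) * χ x)
    (ξup : Fin 5 → Spacetime → ℝ)
    (hξup : ∀ μ x, ξup μ x =
      (∑ ν, eta μ ν * pd ν χ x) - 3 * g * W3 (φ x) * (∑ ν, eta μ ν * A ν x) * χ x)
    (ξ4 : Fin 5 → Fin 5 → Fin 5 → Fin 5 → Spacetime → ℝ)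
    (hξ4 : ∀ μ ν ρ l x, ξ4 μ ν ρ l x =
      -(g / 4) * W5 (φ x) * (∑ s, lev μ ν ρ l s * A s x) * χ x)
    -- the lowered version `ξ_{νρλσ}` of `ξ^{νρλσ}`
    (ξ4low : Fin 5 → Fin 5 → Fin 5 → Fin 5 → Spacetime → ℝ)
    (hξ4low : ∀ a b c d x, ξ4low a b c d x =
      ∑ a', ∑ b', ∑ c', ∑ d',
        eta a a' * eta b b' * eta c c' * eta d d' * ξ4 a' b' c' d' x) :
    -- the composite deformed gauge variation of `A^μ` is proportional to the
    -- Euler-Lagrange derivative with respect to `H`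
    (∀ μ x,
      (∑ ν, eta μ ν * pd ν ε x) - 2 * g * W2 (φ x) * ξup μ x
        - 2 * g * W6 (φ x) *
            (∑ ν, ∑ ρ, ∑ l, ∑ s, lev μ ν ρ l s * ξ4low ν ρ l s x)
      = 2 * g * deriv W2 (φ x) * χ x *
          (∑ ν, eta μ ν * (pd ν φ x + g * W1 (φ x) * A ν x))) ∧
    -- in particular, it vanishes on the stationary surface of the `H`-field equations
    (∀ x, (∀ ν, pd ν φ x + g * W1 (φ x) * A ν x = 0) →
      ∀ μ, (∑ ν, eta μ ν * pd ν ε x) - 2 * g * W2 (φ x) * ξup μ x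
        - 2 * g * W6 (φ x) *
            (∑ ν, ∑ ρ, ∑ l, ∑ s, lev μ ν ρ l s * ξ4low ν ρ l s x) = 0) := by
  have main : ∀ μ x,
      (∑ ν, eta μ ν * pd ν ε x) - 2 * g * W2 (φ x) * ξup μ x
        - 2 * g * W6 (φ x) *
            (∑ ν, ∑ ρ, ∑ l, ∑ s, lev μ ν ρ l s * ξ4low ν ρ l s x)
      = 2 * g * deriv W2 (φ x) * χ x *
          (∑ ν, eta μ ν * (pd ν φ x + g * W1 (φ x) * A ν x)) := by
    intro μ x
    have hεf : ε = fun y => 2 * g * W2 (φ y) * χ y := funext hε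
    have pdE : ∀ ν, pd ν ε x
        = 2 * g * (deriv W2 (φ x) * pd ν φ x * χ x) + 2 * g * W2 (φ x) * pd ν χ x := by
      intro ν
      rw [hεf]
      exact pd_comp_mul W2 hW2 φ χ hφ hχ (2 * g) ν x
    have hcol : ∀ a b c d : Fin 5, ξ4low a b c d x
        = Dc a * (Dc b * (Dc c * (Dc d * ξ4 a b c d x))) := by
      intro a b c d
      rw [hξ4low]
      simp only [mul_assoc, ← Finset.mul_sum, eta_contract]
    have h2 : ∀ a b c d : Fin 5, ξ4 a b c d x
        = ∑ τ, lev a b c d τ * (-(g / 4) * W5 (φ x) * (A τ x * χ x)) := by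
      intro a b c d
      rw [hξ4]
      simp only [Finset.mul_sum, Finset.sum_mul]
      exact Finset.sum_congr rfl fun τ _ => by ring
    have hquad : (∑ ν, ∑ ρ, ∑ l, ∑ s, lev μ ν ρ l s * ξ4low ν ρ l s x)
        = -24 * Dc μ * (-(g / 4) * W5 (φ x) * (A μ x * χ x)) := by
      calc (∑ ν, ∑ ρ, ∑ l, ∑ s, lev μ ν ρ l s * ξ4low ν ρ l s x)
          = ∑ ν, ∑ ρ, ∑ l, ∑ s,
              lev μ ν ρ l s * ((Dc ν * Dc ρ * Dc l * Dc s) *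
                (∑ τ, lev ν ρ l s τ * (-(g / 4) * W5 (φ x) * (A τ x * χ x)))) := by
            refine Finset.sum_congr rfl fun ν _ => Finset.sum_congr rfl fun ρ _ =>
              Finset.sum_congr rfl fun l _ => Finset.sum_congr rfl fun s _ => ?_
            rw [hcol, h2]
            ring
        _ = -24 * Dc μ * (-(g / 4) * W5 (φ x) * (A μ x * χ x)) :=
            key' μ (fun τ => -(g / 4) * W5 (φ x) * (A τ x * χ x))
    rw [hξup μ x, hquad]
    simp only [eta_contract]
    rw [pdE μ]
    have s3 := star3 (φ x)
    have s4 := star4 (φ x)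
    linear_combination (-2 * g ^ 2 * Dc μ * A μ x * χ x) * s3
      + (-12 * g ^ 2 * Dc μ * A μ x * χ x) * s4
  refine ⟨main, ?_⟩
  intro x hx μ
  rw [main μ x, Finset.sum_eq_zero fun ν _ => by rw [hx ν, mul_zero], mul_zero]

end
end
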